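/- Let r ≥ 1 and p ≥ 5 be coprime integers and n ≥ 1. Consider the r×r circulant matrix A over Z/p^n with diagonal entries -2, entries 1 on the two off-diagonals adjacent to the diagonal (cyclically, so A_{1,r} = A_{r,1} = 1 when r ≥ 3), and 0 elsewhere (this is the intersection matrix of the Néron r-gon). Then the kernel of A acting on (Z/p^n)^r is exactly the diagonal subgroup {(a, a, ..., a) : a ∈ Z/p^n}. -/

import Mathlib

/-!
Row `i` of `A v` is the second difference `(v (i+1) - v i) - (v i - v (i-1))`, so on the kernel
the first differences are invariant under the cyclic shift, hence all equal to some `d`.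
They telescope around the cycle, so `r * d = 0`; since `r` is a unit mod `pⁿ`, `d = 0` and `v`
is constant.
-/

namespace Fin

open Fin.NatCast

variable {r : ℕ} [NeZero r]

theorem apply_eq_apply_zero_of_forall_apply_add_one {α : Type*} {f : Fin r → α}
    (h : ∀ i, f (i + 1) = f i) (i : Fin r) : f i = f 0 := by
  have hnat : ∀ k : ℕ, f k = f 0 := by
    intro k
    induction k with
    | zero => simp
    | succ k ih => rw [Nat.cast_succ, h, ih]
  rw [← Fin.cast_val_eq_self i]
  exact hnat i

theorem sum_apply_add_one_sub {M : Type*} [AddCommGroup M] (v : Fin r → M) :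
    ∑ i, (v (i + 1) - v i) = 0 := by
  rw [Finset.sum_sub_distrib, sub_eq_zero]
  exact Equiv.sum_comp (Equiv.addRight 1) v

end Fin

section

variable (R : Type*) [Ring R] (r : ℕ) [NeZero r]

def neronPolygonMatrix : Matrix (Fin r) (Fin r) R :=
  Matrix.of fun i j =>
    (if j = i then -2 else 0) + (if j = i + 1 then 1 else 0) + (if j = i - 1 then 1 else 0)

variable {R r}

theorem neronPolygonMatrix_mulVec_apply (v : Fin r → R) (i : Fin r) :
    (neronPolygonMatrix R r).mulVec v i = (v (i + 1) - v i) - (v i - v (i - 1)) := by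
  simp only [neronPolygonMatrix, Matrix.mulVec, dotProduct, Matrix.of_apply, add_mul, ite_mul,
    zero_mul, Finset.sum_add_distrib, Finset.sum_ite_eq', Finset.mem_univ, if_true]
  noncomm_ring

theorem eq_const_of_forall_sub_eq_sub {v : Fin r → R} (hr : IsUnit (r : R))
    (hv : ∀ i, v (i + 1) - v i = v i - v (i - 1)) : ∃ a, v = fun _ => a := by
  set w : Fin r → R := fun i => v (i + 1) - v i
  have hw : ∀ i, w i = w 0 := Fin.apply_eq_apply_zero_of_forall_apply_add_one fun i => by
    simpa [w] using hv (i + 1)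
  have hw0 : w 0 = 0 := by
    have hsum : ∑ i, w i = 0 := Fin.sum_apply_add_one_sub v
    rw [Finset.sum_congr rfl fun i _ => hw i, Finset.sum_const, Finset.card_univ,
      Fintype.card_fin, nsmul_eq_mul] at hsum
    exact hr.mul_right_eq_zero.mp hsum
  refine ⟨v 0, funext (Fin.apply_eq_apply_zero_of_forall_apply_add_one fun i => ?_)⟩
  exact sub_eq_zero.mp ((hw i).trans hw0)

theorem neronPolygonMatrix_mulVec_eq_zero_iff (hr : IsUnit (r : R)) (v : Fin r → R) :
    (neronPolygonMatrix R r).mulVec v = 0 ↔ ∃ a, v = fun _ => a := by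
  constructor
  · intro h
    refine eq_const_of_forall_sub_eq_sub hr fun i => sub_eq_zero.mp ?_
    rw [← neronPolygonMatrix_mulVec_apply, h, Pi.zero_apply]
  · rintro ⟨a, rfl⟩
    funext i
    simp [neronPolygonMatrix_mulVec_apply]

end

theorem neron_polygon_intersection_matrix_kernel_general
    (p r n : ℕ) [NeZero r]
    (hr : Nat.Coprime r p)
    (v : Fin r → ZMod (p ^ n)) :
    (Matrix.of fun i j : Fin r =>
        (if j = i then (-2 : ZMod (p ^ n)) else 0) +
          (if j = i + 1 then 1 else 0) + (if j = i - 1 then 1 else 0)).mulVec v = 0 ↔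
      ∃ a : ZMod (p ^ n), v = fun _ => a :=
  neronPolygonMatrix_mulVec_eq_zero_iff ((ZMod.isUnit_iff_coprime r (p ^ n)).mpr (hr.pow_right n)) v

theorem neron_polygon_intersection_matrix_kernel
    (p r n : ℕ) [NeZero r] (hp : p.Prime) (hp5 : 5 ≤ p)
    (hr : Nat.Coprime r p) (hn : 1 ≤ n)
    (v : Fin r → ZMod (p ^ n)) :
    (Matrix.of fun i j : Fin r =>
        (if j = i then (-2 : ZMod (p ^ n)) else 0) +
          (if j = i + 1 then 1 else 0) + (if j = i - 1 then 1 else 0)).mulVec v = 0 ↔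
      ∃ a : ZMod (p ^ n), v = fun _ => a :=
  neron_polygon_intersection_matrix_kernel_general p r n hr v
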